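/- Let n ≥ 1, σ an n×n real symmetric positive definite matrix, u > 0, p ∈ ℝⁿ with pᵀσ⁻¹p < u², and S an n×n real symmetric matrix. Set q := σ⁻¹p, v := √(1 − u⁻²pᵀσ⁻¹p), g := u²σ − ppᵀ, h := −v⁻¹( (2/u) p pᵀ − S − u σ ), Φ := S/u − (p pᵀ)/u², and Σ̃ := σ⁻¹ + (q qᵀ)/(u² v²). Then the mean curvature of the spacelike graph satisfies H := tr(g⁻¹ h) = (1/(u v)) ( n + tr(Σ̃ Φ) ). In particular, if p = 0 and S = 0 (the radial graph of a constant function u ≡ R₀ > 0, i.e. a piece of the hyperbolic plane ℋⁿ(R₀)), then H = n/u = n/R₀. -/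

import Mathlib

/-! By the Sherman–Morrison formula the inverse metric is `g⁻¹ = u⁻² Σ̃`. The second fundamental
form splits as `h = v⁻¹ (u Φ + u⁻¹ g)`, so `tr(g⁻¹ h) = v⁻¹ (u⁻¹ tr(Σ̃ Φ) + n / u)`. -/

open Matrix

namespace Matrix

variable {ι K : Type*} [Fintype ι] [DecidableEq ι] [Field K]

/-- The Sherman–Morrison formula. -/
theorem sub_vecMulVec_mul_inv_add {A : Matrix ι ι K} (hA : IsUnit A.det) (a b : ι → K)
    (h : 1 - b ⬝ᵥ (A⁻¹ *ᵥ a) ≠ 0) :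
    (A - vecMulVec a b) *
        (A⁻¹ + (1 - b ⬝ᵥ (A⁻¹ *ᵥ a))⁻¹ • vecMulVec (A⁻¹ *ᵥ a) (b ᵥ* A⁻¹)) = 1 := by
  set c := 1 - b ⬝ᵥ (A⁻¹ *ᵥ a)
  have hc : c⁻¹ - 1 - c⁻¹ * (b ᵥ* A⁻¹ ⬝ᵥ a) = 0 := by
    rw [← dotProduct_mulVec]; field_simp; ring
  simp only [sub_mul, mul_add, Matrix.mul_smul, mul_vecMulVec, mulVec_mulVec,
    mul_nonsing_inv A hA, one_mulVec, vecMulVec_mul, vecMulVec_mulVec, op_smul_eq_smul,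
    smul_vecMulVec]
  linear_combination (norm := module) hc • vecMulVec a (b ᵥ* A⁻¹)

theorem smul_sub_vecMulVec_self_mul_inv_add {σ : Matrix ι ι K} (hσ : σ.IsSymm)
    (hdet : IsUnit σ.det) {c : K} (hc : c ≠ 0) (p : ι → K)
    (hw : 1 - c⁻¹ * (p ⬝ᵥ (σ⁻¹ *ᵥ p)) ≠ 0) :
    (c • σ - vecMulVec p p) *
        (σ⁻¹ + (c * (1 - c⁻¹ * (p ⬝ᵥ (σ⁻¹ *ᵥ p))))⁻¹ •
          vecMulVec (σ⁻¹ *ᵥ p) (σ⁻¹ *ᵥ p)) = c • 1 := by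
  have hpσ : p ᵥ* σ⁻¹ = σ⁻¹ *ᵥ p := by
    rw [← vecMul_transpose, transpose_nonsing_inv, hσ.eq]
  have hSM := sub_vecMulVec_mul_inv_add hdet (c⁻¹ • p) p
    (by rwa [mulVec_smul, dotProduct_smul, smul_eq_mul])
  rw [mulVec_smul, dotProduct_smul, smul_eq_mul, hpσ, smul_vecMulVec] at hSM
  have hscale : c • σ - vecMulVec p p = c • (σ - c⁻¹ • vecMulVec p p) := by
    rw [smul_sub, smul_smul, mul_inv_cancel₀ hc, one_smul]
  rw [hscale, Matrix.smul_mul, ← hSM, mul_inv, smul_vecMulVec, smul_smul, mul_comm]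

theorem trace_inv_mul_smul_add_smul_self {g : Matrix ι ι K} (hg : IsUnit g.det)
    (Φ : Matrix ι ι K) (a b : K) :
    (g⁻¹ * (a • Φ + b • g)).trace = a * (g⁻¹ * Φ).trace + b * Fintype.card ι := by
  rw [Matrix.mul_add, Matrix.mul_smul, Matrix.mul_smul, nonsing_inv_mul g hg, trace_add,
    trace_smul, trace_smul, trace_one, smul_eq_mul, smul_eq_mul]

end Matrix

theorem mean_curvature_formula_general (n : ℕ)
    (σ : Matrix (Fin n) (Fin n) ℝ) (hσ : σ.PosDef)
    (u : ℝ) (hu : 0 < u) (p : Fin n → ℝ) (hp : p ⬝ᵥ (σ⁻¹ *ᵥ p) < u ^ 2)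
    (S : Matrix (Fin n) (Fin n) ℝ)
    (q : Fin n → ℝ) (hq : q = σ⁻¹ *ᵥ p)
    (v : ℝ) (hv : v = Real.sqrt (1 - (u ^ 2)⁻¹ * (p ⬝ᵥ (σ⁻¹ *ᵥ p))))
    (g : Matrix (Fin n) (Fin n) ℝ) (hg : g = u ^ 2 • σ - Matrix.vecMulVec p p)
    (h : Matrix (Fin n) (Fin n) ℝ)
    (hh : h = (-v⁻¹) • ((2 / u) • Matrix.vecMulVec p p - S - u • σ))
    (Φ : Matrix (Fin n) (Fin n) ℝ) (hΦ : Φ = u⁻¹ • S - (u ^ 2)⁻¹ • Matrix.vecMulVec p p)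
    (Sig : Matrix (Fin n) (Fin n) ℝ)
    (hSig : Sig = σ⁻¹ + (u ^ 2 * v ^ 2)⁻¹ • Matrix.vecMulVec q q)
    (H : ℝ) (hH : H = (g⁻¹ * h).trace) :
    H = (u * v)⁻¹ * ((n : ℝ) + (Sig * Φ).trace) ∧
    (p = 0 → S = 0 → H = n / u) := by
  have hu2 : u ^ 2 ≠ 0 := by positivity
  have hw : 0 < 1 - (u ^ 2)⁻¹ * (p ⬝ᵥ (σ⁻¹ *ᵥ p)) := by
    rwa [sub_pos, inv_mul_lt_iff₀ (by positivity), mul_one]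
  have hv_sq : v ^ 2 = 1 - (u ^ 2)⁻¹ * (p ⬝ᵥ (σ⁻¹ *ᵥ p)) := hv ▸ Real.sq_sqrt hw.le
  have hv0 : v ≠ 0 := hv ▸ (Real.sqrt_pos.mpr hw).ne'
  have hσ_symm : σ.IsSymm := by
    rw [IsSymm, ← conjTranspose_eq_transpose_of_trivial]; exact hσ.isHermitian
  have hright : g * ((u ^ 2)⁻¹ • Sig) = 1 := by
    rw [Matrix.mul_smul, hg, hSig, hq, hv_sq,
      smul_sub_vecMulVec_self_mul_inv_add hσ_symm hσ.det_pos.ne'.isUnit hu2 p hw.ne',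
      smul_smul, inv_mul_cancel₀ hu2, one_smul]
  have hh_eq : h = v⁻¹ • (u • Φ + u⁻¹ • g) := by
    subst hh hΦ hg
    match_scalars <;> field_simp
    ring
  have hmain : H = (u * v)⁻¹ * ((n : ℝ) + (Sig * Φ).trace) := by
    rw [hH, hh_eq, Matrix.mul_smul, trace_smul,
      trace_inv_mul_smul_add_smul_self (isUnit_det_of_right_inverse hright),
      inv_eq_right_inv hright, Matrix.smul_mul, trace_smul, Fintype.card_fin, smul_eq_mul,
      smul_eq_mul]
    field_simp
    ring
  refine ⟨hmain, ?_⟩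
  rintro rfl rfl
  simp [hmain, hΦ, hv, div_eq_inv_mul]

/-- The mean curvature `H = tr(g⁻¹h)` of a spacelike radial graph over
`ℋⁿ(1) ⊂ ℝ^{n+1}_1` satisfies `H = (1/(uv)) (n + tr(Σ̃ Φ))`; in particular, for the
radial graph of a constant function (`p = 0`, `S = 0`), i.e. a piece of `ℋⁿ(R₀)`
with `u ≡ R₀`, one has `H = n/u`. -/
theorem mean_curvature_formula (n : ℕ) (hn : 1 ≤ n)
    (σ : Matrix (Fin n) (Fin n) ℝ) (hσ : σ.PosDef)
    (u : ℝ) (hu : 0 < u) (p : Fin n → ℝ) (hp : p ⬝ᵥ (σ⁻¹ *ᵥ p) < u ^ 2)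
    (S : Matrix (Fin n) (Fin n) ℝ) (hS : S.IsSymm)
    (q : Fin n → ℝ) (hq : q = σ⁻¹ *ᵥ p)
    (v : ℝ) (hv : v = Real.sqrt (1 - (u ^ 2)⁻¹ * (p ⬝ᵥ (σ⁻¹ *ᵥ p))))
    (g : Matrix (Fin n) (Fin n) ℝ) (hg : g = u ^ 2 • σ - Matrix.vecMulVec p p)
    (h : Matrix (Fin n) (Fin n) ℝ)
    (hh : h = (-v⁻¹) • ((2 / u) • Matrix.vecMulVec p p - S - u • σ))
    (Φ : Matrix (Fin n) (Fin n) ℝ) (hΦ : Φ = u⁻¹ • S - (u ^ 2)⁻¹ • Matrix.vecMulVec p p)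
    (Sig : Matrix (Fin n) (Fin n) ℝ)
    (hSig : Sig = σ⁻¹ + (u ^ 2 * v ^ 2)⁻¹ • Matrix.vecMulVec q q)
    (H : ℝ) (hH : H = (g⁻¹ * h).trace) :
    H = (u * v)⁻¹ * ((n : ℝ) + (Sig * Φ).trace) ∧
    (p = 0 → S = 0 → H = n / u) :=
  mean_curvature_formula_general n σ hσ u hu p hp S q hq v hv g hg h hh Φ hΦ Sig hSig H hH
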